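/- arXiv:2004.12142 — 2 statements merged into one kernel-verified Lean document; each statement's English description precedes it below -/
import Mathlib

section
/- For all integers n ≥ 0 and r ≥ 0, the generalized degenerate harmonic number satisfies H_λ(n+r+1, r) = Σ_{l=r+1}^{n+r+1} (−1)^{r+1−l}·Σ_{l_1+···+l_{r+1}=l, each l_i ≥ 1} (λ^{l−r−1}/(l_1!···l_{r+1}!))·(1)_{l_1,1/λ}···(1)_{l_{r+1},1/λ}. -/
/-!
Since `1 - t` is a unit, the defining identity says that `H_λ(n+r+1, r)` is the `n`-th partial
sum of the coefficients of `t^{-(r+1)} (-log_λ(1-t))^{r+1}`, i.e. the sum of the coefficients of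
`t^l`, `r+1 ≤ l ≤ n+r+1`, in `(-log_λ(1-t))^{r+1}`. As `-log_λ(1-t)` has no constant term, the
coefficient of `t^l` in its `(r+1)`-st power is a sum over the compositions of `l` into `r+1`
positive parts, and the signs `(-1)^{lᵢ+1}` of the factors multiply to `(-1)^{r+1-l}`.
-/

open Finset PowerSeries

/-- degenerate falling factorial `(x)_{n,λ}`; `dff 1 x n` is the ordinary falling factorial. -/
noncomputable def dff (lam x : ℝ) (n : ℕ) : ℝ := ∏ i ∈ Finset.range n, (x - (i : ℝ) * lam)

/-- `(1)_{n,1/λ} = ∏_{i<n} (1 - i/λ)`. -/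
noncomputable def oneFall (lam : ℝ) (n : ℕ) : ℝ := ∏ i ∈ Finset.range n, (1 - (i : ℝ) / lam)

/-- degenerate exponential `e_λ^x(t)` as a formal power series. -/
noncomputable def degExp (lam x : ℝ) : PowerSeries ℝ :=
  PowerSeries.mk fun n => dff lam x n / n.factorial

/-- `(1+t)^y = Σ_{n≥0} (y)_n t^n/n!`. -/
noncomputable def onePlus (y : ℝ) : PowerSeries ℝ :=
  PowerSeries.mk fun n => dff 1 y n / n.factorial

/-- `(1-t)^y = Σ_{n≥0} (y)_n (-1)^n t^n/n!`. -/
noncomputable def oneMinus (y : ℝ) : PowerSeries ℝ :=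
  PowerSeries.mk fun n => dff 1 y n * (-1) ^ n / n.factorial

/-- `log_λ(1+t) = Σ_{n≥1} λ^{n-1} (1)_{n,1/λ} t^n/n!`. -/
noncomputable def degLog (lam : ℝ) : PowerSeries ℝ :=
  PowerSeries.mk fun n => if n = 0 then 0 else lam ^ (n - 1) * oneFall lam n / n.factorial

/-- `log_λ(1-t) = Σ_{n≥1} λ^{n-1} (1)_{n,1/λ} (-1)^n t^n/n!`. -/
noncomputable def degLogNeg (lam : ℝ) : PowerSeries ℝ :=
  PowerSeries.mk fun n =>
    if n = 0 then 0 else lam ^ (n - 1) * oneFall lam n * (-1) ^ n / n.factorial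

/-- composition `f(g(t))` of formal power series (the usual composition when the
constant term of `g` is zero). -/
noncomputable def pcomp (f g : PowerSeries ℝ) : PowerSeries ℝ :=
  PowerSeries.mk fun n =>
    ∑ k ∈ Finset.range (n + 1), (PowerSeries.coeff k f) * (PowerSeries.coeff n (g ^ k))

lemma neg_one_zpow_natCast_sub {α : Type*} [DivisionRing α] (m k : ℕ) :
    (-1 : α) ^ ((m : ℤ) - k) = (-1) ^ (m + k) := by
  rw [show (m : ℤ) - k = ((m + k : ℕ) : ℤ) - 2 * k by push_cast; ring,
    zpow_sub₀ (by norm_num), (even_two_mul _).neg_one_zpow, div_one, zpow_natCast]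

lemma Finset.sum_finsuppAntidiag_univ_eq_sum_antidiagonalTuple {M : Type*} [AddCommMonoid M]
    (k n : ℕ) (F : (Fin k → ℕ) → M) :
    ∑ f ∈ finsuppAntidiag univ n, F f = ∑ g ∈ Nat.antidiagonalTuple k n, F g := by
  refine sum_equiv Finsupp.equivFunOnFinite (fun f => ?_) (fun _ _ => rfl)
  simp [Nat.mem_antidiagonalTuple]

lemma Finset.Nat.sum_sub_one_of_mem_antidiagonalTuple {k n : ℕ} {g : Fin k → ℕ}
    (hg : g ∈ Nat.antidiagonalTuple k n) (hpos : ∀ i, 1 ≤ g i) :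
    ∑ i, (g i - 1) = n - k := by
  rw [sum_tsub_distrib _ fun i _ => hpos i, Nat.mem_antidiagonalTuple.mp hg]
  simp

namespace PowerSeries

variable {R : Type*}

lemma coeff_pow_eq_sum_antidiagonalTuple [CommSemiring R] (φ : R⟦X⟧) (k n : ℕ) :
    coeff n (φ ^ k) = ∑ g ∈ Finset.Nat.antidiagonalTuple k n, ∏ i, coeff (g i) φ := by
  rw [← Fin.prod_const k φ, coeff_prod]
  exact Finset.sum_finsuppAntidiag_univ_eq_sum_antidiagonalTuple k n fun g => ∏ i, coeff (g i) φ

lemma coeff_pow_of_constantCoeff_eq_zero [CommSemiring R] {φ : R⟦X⟧}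
    (hφ : constantCoeff φ = 0) (k n : ℕ) :
    coeff n (φ ^ k) = ∑ g ∈ (Finset.Nat.antidiagonalTuple k n).filter (fun g => ∀ i, 1 ≤ g i),
      ∏ i, coeff (g i) φ := by
  rw [coeff_pow_eq_sum_antidiagonalTuple, Finset.sum_filter_of_ne]
  intro g _ hne i
  by_contra! hi
  refine hne (Finset.prod_eq_zero (Finset.mem_univ i) ?_)
  rw [Nat.lt_one_iff.mp hi, coeff_zero_eq_constantCoeff_apply, hφ]

lemma coeff_eq_sum_range_coeff_one_sub_X_mul [CommRing R] (g : R⟦X⟧) (n : ℕ) :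
    coeff n g = ∑ i ∈ Finset.range (n + 1), coeff i ((1 - X) * g) := by
  induction n with
  | zero => simp
  | succ n ih =>
    rw [Finset.sum_range_succ, ← ih, sub_mul, one_mul, map_sub, coeff_succ_X_mul]
    ring

end PowerSeries

lemma constantCoeff_degLogNeg (lam : ℝ) : constantCoeff (degLogNeg lam) = 0 := by
  rw [← coeff_zero_eq_constantCoeff_apply, degLogNeg, coeff_mk, if_pos rfl]

lemma coeff_neg_degLogNeg (lam : ℝ) {k : ℕ} (hk : k ≠ 0) :
    coeff k (-degLogNeg lam) = (-1) ^ (k + 1) * (lam ^ (k - 1) / k.factorial * oneFall lam k) := by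
  simp only [map_neg, degLogNeg, coeff_mk, if_neg hk]
  ring

lemma coeff_pow_neg_degLogNeg (lam : ℝ) (k l : ℕ) :
    coeff l ((-degLogNeg lam) ^ k) = (-1 : ℝ) ^ ((k : ℤ) - l) *
      ∑ f ∈ (Finset.Nat.antidiagonalTuple k l).filter (fun f => ∀ i, 1 ≤ f i),
        lam ^ (l - k) / (∏ i, ((f i).factorial : ℝ)) * ∏ i, oneFall lam (f i) := by
  rw [coeff_pow_of_constantCoeff_eq_zero (by rw [map_neg, constantCoeff_degLogNeg, neg_zero]),
    Finset.mul_sum]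
  refine Finset.sum_congr rfl fun g hg => ?_
  rw [Finset.mem_filter] at hg
  obtain ⟨hg, hpos⟩ := hg
  have hsum : ∑ i, (g i + 1) = l + k := by
    rw [Finset.sum_add_distrib, Finset.Nat.mem_antidiagonalTuple.mp hg]; simp
  rw [Finset.prod_congr rfl fun i _ => coeff_neg_degLogNeg lam (by have := hpos i; omega),
    Finset.prod_mul_distrib, Finset.prod_mul_distrib, Finset.prod_div_distrib,
    Finset.prod_pow_eq_pow_sum, Finset.prod_pow_eq_pow_sum, hsum,
    Finset.Nat.sum_sub_one_of_mem_antidiagonalTuple hg hpos, neg_one_zpow_natCast_sub, add_comm k]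

theorem stmt_18_general (lam : ℝ)
    (HG : ℕ → ℕ → ℝ)
    (hHG : ∀ r : ℕ, (1 - PowerSeries.X) * PowerSeries.X ^ (r + 1) *
      PowerSeries.mk (fun n => HG (n + r + 1) r) = (- degLogNeg lam) ^ (r + 1))
    (n r : ℕ) :
    HG (n + r + 1) r =
      ∑ l ∈ Finset.Icc (r + 1) (n + r + 1), (-1 : ℝ) ^ (((r : ℤ) + 1) - (l : ℤ)) *
        ∑ f ∈ (Finset.Nat.antidiagonalTuple (r + 1) l).filter (fun f => ∀ i, 1 ≤ f i),
          lam ^ (l - (r + 1)) / (∏ i, ((f i).factorial : ℝ)) *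
            ∏ i, oneFall lam (f i) := by
  set G : ℝ⟦X⟧ := mk fun m => HG (m + r + 1) r
  have hshift (i : ℕ) :
      coeff i ((1 - X) * G) = coeff (r + 1 + i) ((-degLogNeg lam) ^ (r + 1)) := by
    rw [← hHG, mul_comm (1 - X) (X ^ (r + 1)), mul_assoc, add_comm, coeff_X_pow_mul]
  calc HG (n + r + 1) r = coeff n G := by rw [coeff_mk]
    _ = ∑ i ∈ Finset.range (n + 1), coeff (r + 1 + i) ((-degLogNeg lam) ^ (r + 1)) := by
      simp only [coeff_eq_sum_range_coeff_one_sub_X_mul G n, hshift]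
    _ = ∑ l ∈ Finset.Icc (r + 1) (n + r + 1), coeff l ((-degLogNeg lam) ^ (r + 1)) := by
      rw [← Finset.Ico_add_one_right_eq_Icc, Finset.sum_Ico_eq_sum_range,
        show n + r + 1 + 1 - (r + 1) = n + 1 by omega]
    _ = _ := by
      refine Finset.sum_congr rfl fun l _ => ?_
      rw [coeff_pow_neg_degLogNeg, Nat.cast_succ]

/-- Explicit expression for the generalized degenerate harmonic numbers:
`H_λ(n+r+1, r) = Σ_{l=r+1}^{n+r+1} (-1)^{r+1-l} Σ_{l₁+⋯+l_{r+1}=l, lᵢ≥1}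
  (λ^{l-r-1}/(l₁!⋯l_{r+1}!)) (1)_{l₁,1/λ} ⋯ (1)_{l_{r+1},1/λ}`. -/
theorem stmt_18 (lam : ℝ) (hlam : lam ≠ 0)
    (HG : ℕ → ℕ → ℝ)
    (hHG : ∀ r : ℕ, (1 - PowerSeries.X) * PowerSeries.X ^ (r + 1) *
      PowerSeries.mk (fun n => HG (n + r + 1) r) = (- degLogNeg lam) ^ (r + 1))
    (n r : ℕ) :
    HG (n + r + 1) r =
      ∑ l ∈ Finset.Icc (r + 1) (n + r + 1), (-1 : ℝ) ^ (((r : ℤ) + 1) - (l : ℤ)) *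
        ∑ f ∈ (Finset.Nat.antidiagonalTuple (r + 1) l).filter (fun f => ∀ i, 1 ≤ f i),
          lam ^ (l - (r + 1)) / (∏ i, ((f i).factorial : ℝ)) *
            ∏ i, oneFall lam (f i) :=
  stmt_18_general lam HG hHG n r
end

section
/- For every integer n ≥ 0, every integer r ≥ 1 and every real number x, Σ_{k=0}^{n} (binom(n,k)/binom(k+r+1,k))·S_{1,λ}(k+r+1, r+1)·C_{n−k}^{(r)}(x−1) = Σ_{l=0}^{n} binom(n,l)·l!·(−1)^l·H_λ(l+r+1, r)·C_{n−l}^{(r)}(x), where binom denotes the ordinary binomial coefficient. -/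
open Finset PowerSeries

-- L1 Pascal
lemma dff_one_succ (y : ℝ) (n : ℕ) : dff 1 (y+1) (n+1) = (y+1) * dff 1 y n := by
  unfold dff
  rw [Finset.prod_range_succ']
  simp only [Nat.cast_zero, zero_mul, sub_zero, Nat.cast_add, Nat.cast_one, mul_one]
  rw [mul_comm]
  congr 1
  apply Finset.prod_congr rfl
  intro i _
  push_cast
  ring

lemma dff_succ (lam y : ℝ) (n : ℕ) : dff lam y (n+1) = dff lam y n * (y - n * lam) := by
  unfold dff; rw [Finset.prod_range_succ]

lemma pascal (y : ℝ) (n : ℕ) :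
    dff 1 (y+1) (n+1) = dff 1 y (n+1) + (n+1) * dff 1 y n := by
  rw [dff_one_succ, dff_succ]; ring

lemma onePlus_succ (y : ℝ) : onePlus (y+1) = (1 + PowerSeries.X) * onePlus y := by
  ext n
  rw [add_mul, one_mul]
  rcases n with _ | m
  · simp [onePlus, dff, PowerSeries.coeff_zero_eq_constantCoeff]
  · rw [map_add, PowerSeries.coeff_succ_X_mul]
    simp only [onePlus, PowerSeries.coeff_mk]
    rw [pascal]
    have h1 : ((m+1).factorial : ℝ) ≠ 0 := Nat.cast_ne_zero.mpr (Nat.factorial_ne_zero _)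
    have h2 : ((m).factorial : ℝ) ≠ 0 := Nat.cast_ne_zero.mpr (Nat.factorial_ne_zero _)
    rw [Nat.factorial_succ] at *
    push_cast at *
    field_simp

lemma onePlus_zero : onePlus 0 = 1 := by
  ext n
  rcases n with _ | m
  · simp [onePlus, dff]
  · simp [onePlus, PowerSeries.coeff_one, dff, Finset.prod_range_succ']

lemma onePlus_nat (m : ℕ) : onePlus (m : ℝ) = (1 + PowerSeries.X) ^ m := by
  induction m with
  | zero => simpa using onePlus_zero
  | succ k ih =>
    push_cast
    rw [onePlus_succ, ih, pow_succ, mul_comm]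

lemma dff_nat_eq_zero {m l : ℕ} (h : m < l) : dff 1 (m : ℝ) l = 0 := by
  unfold dff
  apply Finset.prod_eq_zero (Finset.mem_range.mpr h)
  simp

lemma dff_nat_eq_choose {m l : ℕ} (h : l ≤ m) :
    dff 1 (m : ℝ) l = (l.factorial : ℝ) * (m.choose l : ℝ) := by
  have : dff 1 (m:ℝ) l = (m.descFactorial l : ℝ) := by
    rw [Nat.descFactorial_eq_prod_range, Nat.cast_prod]
    unfold dff
    apply Finset.prod_congr rfl
    intro i hi
    have hi' : i < l := Finset.mem_range.mp hi
    have : (i:ℝ) ≤ m := by exact_mod_cast le_of_lt (lt_of_lt_of_le hi' h)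
    rw [Nat.cast_sub (le_of_lt (lt_of_lt_of_le hi' h))]
    ring
  rw [this, Nat.descFactorial_eq_factorial_mul_choose]
  push_cast; ring

lemma coeff_pow_eq_zero {u : PowerSeries ℝ} (hu : PowerSeries.constantCoeff u = 0)
    {n l : ℕ} (h : n < l) : PowerSeries.coeff n (u ^ l) = 0 := by
  obtain ⟨g, rfl⟩ := PowerSeries.X_dvd_iff.mpr hu
  rw [mul_pow, PowerSeries.coeff_X_pow_mul']
  simp [Nat.not_le_of_lt h, if_neg]

lemma constantCoeff_onePlus (y : ℝ) : PowerSeries.constantCoeff (onePlus y) = 1 := by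
  simp [onePlus, PowerSeries.constantCoeff_mk, dff]

lemma nat_identity (p m n : ℕ) :
    dff 1 ((p:ℝ) * (m:ℝ)) n = ∑ l ∈ Finset.range (n+1),
      dff 1 (m:ℝ) l * ((n.factorial : ℝ) / (l.factorial : ℝ)) *
        PowerSeries.coeff n ((onePlus (p:ℝ) - 1)^l) := by
  set u := onePlus (p:ℝ) - 1 with hu_def
  have hu : PowerSeries.constantCoeff u = 0 := by
    simp [hu_def, constantCoeff_onePlus]
  have hbin : (u + 1) ^ m = ∑ l ∈ Finset.range (m+1), u ^ l * PowerSeries.C ((m.choose l : ℝ)) := by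
    rw [add_pow]
    apply Finset.sum_congr rfl
    intro l _
    rw [one_pow, mul_one, map_natCast]
  have hup : u + 1 = onePlus (p:ℝ) := by rw [hu_def]; ring
  have hpow : (u + 1) ^ m = onePlus ((p:ℝ) * (m:ℝ)) := by
    rw [hup, onePlus_nat, ← pow_mul, ← onePlus_nat]
    push_cast
    ring_nf
  have hco : dff 1 ((p:ℝ)*(m:ℝ)) n / (n.factorial : ℝ) =
      ∑ l ∈ Finset.range (m+1), PowerSeries.coeff n (u ^ l) * (m.choose l : ℝ) := by
    calc dff 1 ((p:ℝ)*(m:ℝ)) n / (n.factorial : ℝ)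
        = PowerSeries.coeff n (onePlus ((p:ℝ)*(m:ℝ))) := by simp [onePlus]
      _ = PowerSeries.coeff n ((u+1)^m) := by rw [hpow]
      _ = ∑ l ∈ Finset.range (m+1), PowerSeries.coeff n (u ^ l) * (m.choose l : ℝ) := by
          rw [hbin, map_sum]
          exact Finset.sum_congr rfl fun l _ => PowerSeries.coeff_mul_C _ _ _
  set N := max n m with hN
  have h1 : ∑ l ∈ Finset.range (m+1), PowerSeries.coeff n (u ^ l) * (m.choose l : ℝ)
      = ∑ l ∈ Finset.range (N+1), PowerSeries.coeff n (u ^ l) * (m.choose l : ℝ) := by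
    apply Finset.sum_subset
    · exact Finset.range_subset_range.mpr (by omega)
    · intro l _ hl
      have : m < l := by simpa using Finset.mem_range.not.mp hl |> fun h => by omega
      rw [Nat.choose_eq_zero_of_lt this]
      simp
  have h2 : ∑ l ∈ Finset.range (n+1),
      dff 1 (m:ℝ) l * ((n.factorial : ℝ) / (l.factorial : ℝ)) * PowerSeries.coeff n (u^l)
      = ∑ l ∈ Finset.range (N+1),
      dff 1 (m:ℝ) l * ((n.factorial : ℝ) / (l.factorial : ℝ)) * PowerSeries.coeff n (u^l) := by
    apply Finset.sum_subset
    · exact Finset.range_subset_range.mpr (by omega)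
    · intro l _ hl
      have hl' : n < l := by
        have := Finset.mem_range.not.mp hl; omega
      rw [coeff_pow_eq_zero hu hl']
      ring
  have h3 : ∀ l ∈ Finset.range (N+1),
      dff 1 (m:ℝ) l * ((n.factorial : ℝ) / (l.factorial : ℝ)) * PowerSeries.coeff n (u^l)
      = (n.factorial : ℝ) * (PowerSeries.coeff n (u ^ l) * (m.choose l : ℝ)) := by
    intro l _
    rcases le_or_gt l m with h | h
    · rw [dff_nat_eq_choose h]
      have : (l.factorial : ℝ) ≠ 0 := Nat.cast_ne_zero.mpr (Nat.factorial_ne_zero _)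
      field_simp
    · rw [dff_nat_eq_zero h, Nat.choose_eq_zero_of_lt h]
      simp
  rw [h2, Finset.sum_congr rfl h3, ← Finset.mul_sum, ← h1, ← hco]
  have : ((n.factorial : ℕ) : ℝ) ≠ 0 := Nat.cast_ne_zero.mpr (Nat.factorial_ne_zero _)
  field_simp

noncomputable def dffPoly (lam : ℝ) (n : ℕ) : Polynomial ℝ :=
  ∏ i ∈ Finset.range n, (Polynomial.X - Polynomial.C ((i:ℝ) * lam))

lemma dffPoly_eval (lam x : ℝ) (n : ℕ) : (dffPoly lam n).eval x = dff lam x n := by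
  unfold dffPoly dff
  rw [Polynomial.eval_prod]
  exact Finset.prod_congr rfl fun i _ => by simp

lemma poly_ext {p q : Polynomial ℝ} (h : ∀ m : ℕ, p.eval (m:ℝ) = q.eval (m:ℝ)) : p = q := by
  apply Polynomial.eq_of_infinite_eval_eq
  apply Set.Infinite.mono (s := Set.range (fun m : ℕ => (m:ℝ)))
  · rintro _ ⟨m, rfl⟩; exact h m
  · exact Set.infinite_range_of_injective Nat.cast_injective

/-- power series over polynomials representing `(1+t)^A` with `A` an indeterminate -/
noncomputable def OPp : PowerSeries (Polynomial ℝ) :=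
  PowerSeries.mk fun k => Polynomial.C (1 / (k.factorial : ℝ)) * dffPoly 1 k

lemma OPp_map (a : ℝ) : PowerSeries.map (Polynomial.evalRingHom a) OPp = onePlus a := by
  ext n
  simp [OPp, onePlus, PowerSeries.coeff_map, dffPoly_eval, div_eq_mul_inv, mul_comm]

lemma OPp_coeff_eval (a : ℝ) (n l : ℕ) :
    ((PowerSeries.coeff n) ((OPp - 1)^l)).eval a
      = PowerSeries.coeff n ((onePlus a - 1)^l) := by
  have : PowerSeries.map (Polynomial.evalRingHom a) ((OPp - 1)^l) = (onePlus a - 1)^l := by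
    rw [map_pow, map_sub, OPp_map, map_one]
  rw [← this, PowerSeries.coeff_map]
  rfl

lemma real_identity (a y : ℝ) (n : ℕ) :
    dff 1 (a*y) n = ∑ l ∈ Finset.range (n+1),
      dff 1 y l * ((n.factorial : ℝ) / (l.factorial : ℝ)) *
        PowerSeries.coeff n ((onePlus a - 1)^l) := by
  have stepA : ∀ (m : ℕ) (a : ℝ), dff 1 (a * (m:ℝ)) n = ∑ l ∈ Finset.range (n+1),
      dff 1 (m:ℝ) l * ((n.factorial : ℝ) / (l.factorial : ℝ)) *
        PowerSeries.coeff n ((onePlus a - 1)^l) := by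
    intro m a
    set P := (dffPoly 1 n).comp (Polynomial.X * Polynomial.C (m:ℝ)) with hP
    set Q := ∑ l ∈ Finset.range (n+1),
      Polynomial.C (dff 1 (m:ℝ) l * ((n.factorial : ℝ) / (l.factorial : ℝ))) *
        (PowerSeries.coeff n ((OPp - 1)^l)) with hQ
    have hPe : ∀ b : ℝ, P.eval b = dff 1 (b * (m:ℝ)) n := by
      intro b
      rw [hP, Polynomial.eval_comp]
      simp [dffPoly_eval]
    have hQe : ∀ b : ℝ, Q.eval b = ∑ l ∈ Finset.range (n+1),
        dff 1 (m:ℝ) l * ((n.factorial : ℝ) / (l.factorial : ℝ)) *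
          PowerSeries.coeff n ((onePlus b - 1)^l) := by
      intro b
      rw [hQ, Polynomial.eval_finset_sum]
      exact Finset.sum_congr rfl fun l _ => by
        rw [Polynomial.eval_mul, Polynomial.eval_C, OPp_coeff_eval]
    have hPQ : P = Q := by
      apply poly_ext
      intro p
      rw [hPe, hQe]
      exact nat_identity p m n
    calc dff 1 (a * (m:ℝ)) n = P.eval a := (hPe a).symm
      _ = Q.eval a := by rw [hPQ]
      _ = _ := hQe a
  set P := (dffPoly 1 n).comp (Polynomial.C a * Polynomial.X) with hP
  set Q := ∑ l ∈ Finset.range (n+1),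
    dffPoly 1 l * Polynomial.C (((n.factorial : ℝ) / (l.factorial : ℝ)) *
      PowerSeries.coeff n ((onePlus a - 1)^l)) with hQ
  have hPe : ∀ b : ℝ, P.eval b = dff 1 (a * b) n := by
    intro b
    rw [hP, Polynomial.eval_comp]
    simp [dffPoly_eval]
  have hQe : ∀ b : ℝ, Q.eval b = ∑ l ∈ Finset.range (n+1),
      dff 1 b l * ((n.factorial : ℝ) / (l.factorial : ℝ)) *
        PowerSeries.coeff n ((onePlus a - 1)^l) := by
    intro b
    rw [hQ, Polynomial.eval_finset_sum]
    exact Finset.sum_congr rfl fun l _ => by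
      rw [Polynomial.eval_mul, Polynomial.eval_C, dffPoly_eval]; ring
  have hPQ : P = Q := by
    apply poly_ext
    intro m
    rw [hPe, hQe]
    exact stepA m a
  calc dff 1 (a * y) n = P.eval y := (hPe y).symm
    _ = Q.eval y := by rw [hPQ]
    _ = _ := hQe y

section degLogSect
variable {lam : ℝ} (hlam : lam ≠ 0)

include hlam

lemma dff_scale (x : ℝ) (l : ℕ) : dff lam x l = lam ^ l * dff 1 (x / lam) l := by
  unfold dff
  have h : lam ^ l = ∏ _i ∈ Finset.range l, lam := by
    rw [Finset.prod_const, Finset.card_range]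
  rw [h, ← Finset.prod_mul_distrib]
  exact Finset.prod_congr rfl fun i _ => by field_simp

lemma oneFall_scaled (n : ℕ) : lam ^ n * oneFall lam n = dff 1 lam n := by
  unfold oneFall dff
  have h : lam ^ n = ∏ _i ∈ Finset.range n, lam := by
    rw [Finset.prod_const, Finset.card_range]
  rw [h, ← Finset.prod_mul_distrib]
  exact Finset.prod_congr rfl fun i _ => by field_simp

lemma degLog_scaled : PowerSeries.C lam * degLog lam = onePlus lam - 1 := by
  ext n
  rw [map_sub, PowerSeries.coeff_C_mul]
  rcases n with _ | m
  · simp [degLog, onePlus, dff]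
  · have h1 : PowerSeries.coeff (m+1) (1 : PowerSeries ℝ) = 0 := by
      simp [PowerSeries.coeff_one]
    rw [h1, sub_zero]
    simp only [degLog, onePlus, PowerSeries.coeff_mk, if_neg (Nat.succ_ne_zero m)]
    rw [← oneFall_scaled hlam (m+1)]
    have : m + 1 - 1 = m := rfl
    rw [this, pow_succ]
    ring

end degLogSect

section comp
variable {lam : ℝ} (hlam : lam ≠ 0)
include hlam

lemma coeff_degLog_pow (n l : ℕ) :
    lam ^ l * PowerSeries.coeff n ((degLog lam)^l)
      = PowerSeries.coeff n ((onePlus lam - 1)^l) := by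
  have h := congrArg (fun f => PowerSeries.coeff n (f ^ l)) (degLog_scaled hlam)
  simp only [mul_pow, ← map_pow, PowerSeries.coeff_C_mul] at h
  exact h

lemma comp_identity (x : ℝ) (n : ℕ) :
    dff 1 x n = ∑ l ∈ Finset.range (n+1),
      ((n.factorial : ℝ) * PowerSeries.coeff n ((degLog lam)^l) / (l.factorial : ℝ)) *
        dff lam x l := by
  have hx : lam * (x / lam) = x := by field_simp
  have h := real_identity lam (x / lam) n
  rw [hx] at h
  rw [h]
  apply Finset.sum_congr rfl
  intro l _
  rw [dff_scale hlam, ← coeff_degLog_pow hlam n l]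
  ring

end comp

lemma dffPoly_monic (lam : ℝ) (n : ℕ) : (dffPoly lam n).Monic :=
  Polynomial.monic_prod_of_monic _ _ fun i _ => Polynomial.monic_X_sub_C _

lemma dffPoly_natDegree (lam : ℝ) (n : ℕ) : (dffPoly lam n).natDegree = n := by
  unfold dffPoly
  rw [Polynomial.natDegree_prod_of_monic _ _ fun i _ => Polynomial.monic_X_sub_C _]
  simp only [Polynomial.natDegree_X_sub_C]
  simp

lemma indep (lam : ℝ) : ∀ (n : ℕ) (c : ℕ → ℝ),
    (∀ x : ℝ, ∑ l ∈ Finset.range (n+1), c l * dff lam x l = 0) → ∀ l, l ≤ n → c l = 0 := by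
  intro n
  induction n with
  | zero =>
    intro c h l hl
    interval_cases l
    have := h 0
    simpa [dff] using this
  | succ k ih =>
    intro c h l hl
    set q : Polynomial ℝ := ∑ j ∈ Finset.range (k+2), Polynomial.C (c j) * dffPoly lam j with hq
    have hq0 : q = 0 := by
      apply Polynomial.funext
      intro x
      rw [hq, Polynomial.eval_finset_sum, Polynomial.eval_zero]
      rw [← h x]
      exact Finset.sum_congr rfl fun j _ => by
        rw [Polynomial.eval_mul, Polynomial.eval_C, dffPoly_eval]
    have hck : c (k+1) = 0 := by
      have h1 : q.coeff (k+1) = c (k+1) := by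
        rw [hq, Polynomial.finset_sum_coeff, Finset.sum_range_succ]
        have h2 : ∀ j ∈ Finset.range (k+1),
            (Polynomial.C (c j) * dffPoly lam j).coeff (k+1) = 0 := by
          intro j hj
          apply Polynomial.coeff_eq_zero_of_natDegree_lt
          calc (Polynomial.C (c j) * dffPoly lam j).natDegree
              ≤ (Polynomial.C (c j)).natDegree + (dffPoly lam j).natDegree :=
                Polynomial.natDegree_mul_le
            _ < k + 1 := by
                rw [Polynomial.natDegree_C, dffPoly_natDegree, zero_add]
                exact Finset.mem_range.mp hj
        rw [Finset.sum_eq_zero h2, zero_add, Polynomial.coeff_C_mul]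
        have : (dffPoly lam (k+1)).coeff (k+1) = 1 := by
          have := (dffPoly_monic lam (k+1)).coeff_natDegree
          rwa [dffPoly_natDegree] at this
        rw [this, mul_one]
      rw [hq0] at h1
      simpa using h1.symm
    rcases Nat.lt_succ_iff_lt_or_eq.mp (Nat.lt_succ_of_le hl) with h' | h'
    · apply ih c _ l (Nat.lt_succ_iff.mp h')
      intro x
      have := h x
      rw [Finset.sum_range_succ, hck, zero_mul, add_zero] at this
      exact this
    · rw [h']; exact hck

lemma S1_eq {lam : ℝ} (hlam : lam ≠ 0) (S1 : ℕ → ℕ → ℝ)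
    (hS1 : ∀ (x : ℝ) (n : ℕ), dff 1 x n = ∑ l ∈ Finset.range (n + 1), S1 n l * dff lam x l)
    (n l : ℕ) (hl : l ≤ n) :
    S1 n l = (n.factorial : ℝ) * PowerSeries.coeff n ((degLog lam)^l) / (l.factorial : ℝ) := by
  set T : ℕ → ℝ := fun j =>
    (n.factorial : ℝ) * PowerSeries.coeff n ((degLog lam)^j) / (j.factorial : ℝ) with hT
  have h : ∀ x : ℝ, ∑ j ∈ Finset.range (n+1), (S1 n j - T j) * dff lam x j = 0 := by
    intro x
    have h1 := hS1 x n
    have h2 := comp_identity hlam x n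
    simp only [sub_mul, Finset.sum_sub_distrib]
    rw [← h1, ← h2]
    ring
  have h0 : S1 n l - T l = 0 := indep lam n (fun j => S1 n j - T j) h l hl
  simp only [hT] at h0
  linarith

lemma constantCoeff_degLog (lam : ℝ) : PowerSeries.constantCoeff (degLog lam) = 0 := by
  simp [degLog, PowerSeries.constantCoeff_mk]

lemma seriesA {lam : ℝ} (hlam : lam ≠ 0) (r : ℕ) (S1 : ℕ → ℕ → ℝ)
    (hS1 : ∀ (x : ℝ) (n : ℕ), dff 1 x n = ∑ l ∈ Finset.range (n + 1), S1 n l * dff lam x l) :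
    PowerSeries.X^(r+1) * PowerSeries.mk (fun k =>
        S1 (k+r+1) (r+1) * (((r+1).factorial : ℝ)) / (((k+r+1).factorial : ℝ)))
      = (degLog lam)^(r+1) := by
  obtain ⟨g, hg⟩ := PowerSeries.X_dvd_iff.mpr (constantCoeff_degLog lam)
  rw [hg, mul_pow]
  congr 1
  ext k
  rw [PowerSeries.coeff_mk]
  have h1 : PowerSeries.coeff k (g^(r+1))
      = PowerSeries.coeff (k+r+1) ((degLog lam)^(r+1)) := by
    rw [hg, mul_pow, show k+r+1 = k + (r+1) by omega, PowerSeries.coeff_X_pow_mul]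
  rw [h1, S1_eq hlam S1 hS1 (k+r+1) (r+1) (by omega)]
  have h2 : (((k+r+1).factorial : ℕ) : ℝ) ≠ 0 := Nat.cast_ne_zero.mpr (Nat.factorial_ne_zero _)
  have h3 : (((r+1).factorial : ℕ) : ℝ) ≠ 0 := Nat.cast_ne_zero.mpr (Nat.factorial_ne_zero _)
  field_simp

lemma rescale_degLogNeg (lam : ℝ) :
    PowerSeries.rescale (-1 : ℝ) (degLogNeg lam) = degLog lam := by
  ext n
  rw [PowerSeries.coeff_rescale]
  simp only [degLogNeg, degLog, PowerSeries.coeff_mk]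
  rcases n with _ | m
  · simp
  · rw [if_neg (Nat.succ_ne_zero m), if_neg (Nat.succ_ne_zero m)]
    have : ((-1:ℝ))^(m+1) * ((-1:ℝ))^(m+1) = 1 := by rw [← mul_pow]; norm_num
    simp only [Nat.add_sub_cancel]
    field_simp
    linear_combination (lam ^ m * oneFall lam (m+1)) * this

lemma seriesB {lam : ℝ} (r : ℕ) (HG : ℕ → ℕ → ℝ)
    (hHG : (1 - PowerSeries.X) * PowerSeries.X ^ (r + 1) *
      PowerSeries.mk (fun n => HG (n + r + 1) r) = (- degLogNeg lam) ^ (r + 1)) :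
    (1 + PowerSeries.X) * PowerSeries.X^(r+1) *
      PowerSeries.mk (fun l => (-1:ℝ)^l * HG (l+r+1) r) = (degLog lam)^(r+1) := by
  have h := congrArg (PowerSeries.rescale (-1 : ℝ)) hHG
  rw [map_mul, map_mul, map_sub, map_one, map_pow, map_pow, map_neg,
    PowerSeries.rescale_X, rescale_degLogNeg] at h
  have hmk : PowerSeries.rescale (-1 : ℝ) (PowerSeries.mk (fun n => HG (n + r + 1) r))
      = PowerSeries.mk (fun l => (-1:ℝ)^l * HG (l+r+1) r) := by
    ext n
    rw [PowerSeries.coeff_rescale, PowerSeries.coeff_mk, PowerSeries.coeff_mk]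
  rw [hmk] at h
  have hC : PowerSeries.C (-1 : ℝ) * PowerSeries.X = - PowerSeries.X := by
    rw [map_neg, map_one, neg_one_mul]
  rw [hC] at h
  have h2 : (1 - -PowerSeries.X : PowerSeries ℝ) = 1 + PowerSeries.X := by ring
  rw [h2] at h
  have h3 : ((-PowerSeries.X : PowerSeries ℝ))^(r+1) = (-1)^(r+1) * PowerSeries.X^(r+1) := by
    rw [neg_pow]
  have h4 : ((- degLog lam))^(r+1) = (-1)^(r+1) * (degLog lam)^(r+1) := by
    rw [neg_pow]
  rw [h3, h4] at h
  have h5 : ((-1 : PowerSeries ℝ))^(r+1) ≠ 0 :=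
    pow_ne_zero _ (neg_ne_zero.mpr one_ne_zero)
  apply mul_left_cancel₀ h5
  calc (-1 : PowerSeries ℝ)^(r+1) * ((1 + PowerSeries.X) * PowerSeries.X^(r+1) *
        PowerSeries.mk (fun l => (-1:ℝ)^l * HG (l+r+1) r))
      = (1 + PowerSeries.X) * ((-1 : PowerSeries ℝ)^(r+1) * PowerSeries.X^(r+1)) *
        PowerSeries.mk (fun l => (-1:ℝ)^l * HG (l+r+1) r) := by ring
    _ = (-1 : PowerSeries ℝ)^(r+1) * (degLog lam)^(r+1) := h
    _ = _ := by ring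


/-- `Σ_{k=0}^n (binom(n,k)/binom(k+r+1,k)) S_{1,λ}(k+r+1, r+1) C_{n-k}^{(r)}(x-1)
      = Σ_{l=0}^n binom(n,l) l! (-1)^l H_λ(l+r+1, r) C_{n-l}^{(r)}(x)`. -/
theorem stmt_19 (lam : ℝ) (hlam : lam ≠ 0) (r : ℕ) (hr : 1 ≤ r)
    (S1 : ℕ → ℕ → ℝ)
    (hS1 : ∀ (x : ℝ) (n : ℕ), dff 1 x n = ∑ l ∈ Finset.range (n + 1), S1 n l * dff lam x l)
    (C : ℝ → ℕ → ℝ)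
    (hC : ∀ x : ℝ, (onePlus 2 + 1) ^ r *
      PowerSeries.mk (fun n => C x n / n.factorial) = 2 ^ r * onePlus (x + r))
    (HG : ℕ → ℕ → ℝ)
    (hHG : ∀ r : ℕ, (1 - PowerSeries.X) * PowerSeries.X ^ (r + 1) *
      PowerSeries.mk (fun n => HG (n + r + 1) r) = (- degLogNeg lam) ^ (r + 1))
    (n : ℕ) (x : ℝ) :
    ∑ k ∈ Finset.range (n + 1),
      ((n.choose k : ℝ) / ((k + r + 1).choose k : ℝ)) * S1 (k + r + 1) (r + 1) *
        C (x - 1) (n - k) =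
    ∑ l ∈ Finset.range (n + 1),
      (n.choose l : ℝ) * (l.factorial : ℝ) * (-1 : ℝ) ^ l * HG (l + r + 1) r *
        C x (n - l) := by
  have hA := seriesA hlam r S1 hS1
  have hB := seriesB r HG (hHG r)
  set A := PowerSeries.mk (fun k =>
    S1 (k+r+1) (r+1) * (((r+1).factorial : ℝ)) / (((k+r+1).factorial : ℝ))) with hAdef
  set B := PowerSeries.mk (fun l => (-1:ℝ)^l * HG (l+r+1) r) with hBdef
  set Dx := PowerSeries.mk (fun j => C x j / (j.factorial : ℝ)) with hDxdef
  set Dx' := PowerSeries.mk (fun j => C (x-1) j / (j.factorial : ℝ)) with hDx'def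
  have hG : ((onePlus 2 + 1)^r : PowerSeries ℝ) ≠ 0 := by
    intro hcon
    have := congrArg (PowerSeries.constantCoeff) hcon
    rw [map_pow, map_add, constantCoeff_onePlus, map_one, map_zero] at this
    norm_num at this
  have hshift : onePlus (x + (r:ℝ)) = (1 + PowerSeries.X) * onePlus ((x - 1) + (r:ℝ)) := by
    rw [show x + (r:ℝ) = (x - 1 + (r:ℝ)) + 1 by ring]
    exact onePlus_succ _
  have hD : Dx = (1 + PowerSeries.X) * Dx' := by
    apply mul_left_cancel₀ hG
    rw [hC x, hshift]
    calc (2:PowerSeries ℝ)^r * ((1 + PowerSeries.X) * onePlus (x - 1 + (r:ℝ)))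
        = (1 + PowerSeries.X) * ((2:PowerSeries ℝ)^r * onePlus ((x-1) + (r:ℝ))) := by ring
      _ = (1 + PowerSeries.X) * ((onePlus 2 + 1)^r * Dx') := by rw [← hC (x-1)]
      _ = (onePlus 2 + 1)^r * ((1 + PowerSeries.X) * Dx') := by ring
  have hX : (PowerSeries.X : PowerSeries ℝ)^(r+1) ≠ 0 :=
    pow_ne_zero _ PowerSeries.X_ne_zero
  have key : A * Dx' = B * Dx := by
    apply mul_left_cancel₀ hX
    calc PowerSeries.X^(r+1) * (A * Dx') = (PowerSeries.X^(r+1) * A) * Dx' := by ring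
      _ = (degLog lam)^(r+1) * Dx' := by rw [hA]
      _ = ((1 + PowerSeries.X) * PowerSeries.X^(r+1) * B) * Dx' := by rw [hB]
      _ = PowerSeries.X^(r+1) * (B * ((1 + PowerSeries.X) * Dx')) := by ring
      _ = PowerSeries.X^(r+1) * (B * Dx) := by rw [← hD]
  have hcoeff := congrArg (PowerSeries.coeff n) key
  rw [PowerSeries.coeff_mul, PowerSeries.coeff_mul,
    Finset.Nat.sum_antidiagonal_eq_sum_range_succ_mk,
    Finset.Nat.sum_antidiagonal_eq_sum_range_succ_mk] at hcoeff
  simp only [hAdef, hBdef, hDxdef, hDx'def, PowerSeries.coeff_mk] at hcoeff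
  have hfac : ∀ m : ℕ, ((m.factorial : ℕ) : ℝ) ≠ 0 :=
    fun m => Nat.cast_ne_zero.mpr (Nat.factorial_ne_zero _)
  calc ∑ k ∈ Finset.range (n + 1),
      ((n.choose k : ℝ) / ((k + r + 1).choose k : ℝ)) * S1 (k + r + 1) (r + 1) *
        C (x - 1) (n - k)
      = (n.factorial : ℝ) * ∑ k ∈ Finset.range (n+1),
          (S1 (k+r+1) (r+1) * (((r+1).factorial : ℝ)) / (((k+r+1).factorial : ℝ))) *
            (C (x-1) (n-k) / (((n-k).factorial : ℝ))) := by
        rw [Finset.mul_sum]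
        apply Finset.sum_congr rfl
        intro k hk
        have hk' : k ≤ n := by have := Finset.mem_range.mp hk; omega
        rw [Nat.cast_choose ℝ hk', Nat.cast_choose ℝ (show k ≤ k + r + 1 by omega),
          show k + r + 1 - k = r + 1 by omega]
        field_simp
    _ = (n.factorial : ℝ) * ∑ l ∈ Finset.range (n+1),
          ((-1:ℝ)^l * HG (l+r+1) r) * (C x (n-l) / (((n-l).factorial : ℝ))) := by
        rw [hcoeff]
    _ = ∑ l ∈ Finset.range (n + 1),
      (n.choose l : ℝ) * (l.factorial : ℝ) * (-1 : ℝ) ^ l * HG (l + r + 1) r *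
        C x (n - l) := by
        rw [Finset.mul_sum]
        apply Finset.sum_congr rfl
        intro l hl
        have hl' : l ≤ n := by have := Finset.mem_range.mp hl; omega
        rw [Nat.cast_choose ℝ hl']
        field_simp
end
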